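/- arXiv:0811.3475 — 2 statements merged into one kernel-verified Lean document; each statement's English description precedes it below -/
import Mathlib

section
/- In a finite directed multigraph, for any distinct vertices s and t, the maximum number of pairwise internally-disjoint s-to-t paths is at most the maximum number of pairwise edge-disjoint s-to-t paths, which equals the minimum size of an s,t-edge cut. -/
/-- A directed multigraph on vertex type `V` with edge type `E`. -/
structure Multigraph (V E : Type) where
  tail : E → V
  head : E → V

namespace Multigraph

variable {V E : Type}

/-- A (directed) walk from `s` to `t`: a nonempty list of edges, consecutive
edges compatible, starting at `s` and ending at `t`. -/
structure Walk (G : Multigraph V E) (s t : V) where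
  edges : List E
  ne : edges ≠ []
  first : G.tail (edges.head ne) = s
  last : G.head (edges.getLast ne) = t
  chain : edges.Chain' fun e f => G.head e = G.tail f

namespace Walk

variable {G : Multigraph V E} {s t : V}

/-- The internal vertices of a walk: heads of all edges except the last. -/
def internals (w : G.Walk s t) : Set V :=
  {v | ∃ e ∈ w.edges.dropLast, G.head e = v}

/-- All vertices visited by a walk. -/
def vertexSet (w : G.Walk s t) : Set V :=
  {v | v = s ∨ ∃ e ∈ w.edges, G.head e = v}

/-- The set of edges used by a walk. -/
def edgeSet (w : G.Walk s t) : Set E := {e | e ∈ w.edges}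

/-- A walk is simple (a path) if it visits no vertex twice. -/
def IsSimple (w : G.Walk s t) : Prop := (s :: w.edges.map G.head).Nodup

end Walk

/-- There exist `n` pairwise internally-disjoint paths from `s` to `t`
(in a multigraph, parallel direct edges count as distinct internally-disjoint
paths, so pairwise edge-disjointness is also required). -/
def HasIntDisjoint (G : Multigraph V E) (s t : V) (n : ℕ) : Prop :=
  ∃ P : Fin n → G.Walk s t, ∀ i j, i ≠ j →
    (P i).internals ∩ (P j).internals = ∅ ∧ (P i).edgeSet ∩ (P j).edgeSet = ∅

/-- There exist `n` pairwise edge-disjoint walks from `s` to `t`. -/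
def HasEdgeDisjoint (G : Multigraph V E) (s t : V) (n : ℕ) : Prop :=
  ∃ P : Fin n → G.Walk s t, ∀ i j, i ≠ j →
    (P i).edgeSet ∩ (P j).edgeSet = ∅

/-- `A ⊆ V \ {s,t}` is an `s,t`-vertex cut: removing `A` destroys all
walks from `s` to `t`, i.e. every walk from `s` to `t` meets `A`. -/
def IsVertexCut (G : Multigraph V E) (s t : V) (A : Set V) : Prop :=
  s ∉ A ∧ t ∉ A ∧ ∀ w : G.Walk s t, ∃ v ∈ w.vertexSet, v ∈ A

/-- There is no edge from `s` to `t`. -/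
def Nonadjacent (G : Multigraph V E) (s t : V) : Prop :=
  ∀ e : E, ¬(G.tail e = s ∧ G.head e = t)

/-- The edge cut `[S, S̄]`: all edges with tail in `S` and head outside `S`. -/
def cutE (G : Multigraph V E) [Fintype E] [DecidableEq V] (S : Finset V) : Finset E :=
  Finset.univ.filter fun e => G.tail e ∈ S ∧ G.head e ∉ S

/-- `tail([S, S̄])`: the set of tails of the edges in the cut `[S, S̄]`. -/
def tailSet (G : Multigraph V E) [Fintype E] [DecidableEq V] (S : Finset V) : Finset V :=
  (G.cutE S).image G.tail

/-- The parents of a vertex `v`. -/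
def parents (G : Multigraph V E) (v : V) : Set V :=
  {u | ∃ e : E, G.tail e = u ∧ G.head e = v}

/-- The in-degree of a vertex: number of edges entering it. -/
def indeg (G : Multigraph V E) [Fintype E] [DecidableEq V] (t : V) : ℕ :=
  (Finset.univ.filter fun e => G.head e = t).card

/-- The diversity `d(v) = |Γ⁻(v) \ {s}| + |[s,v]|` of a vertex `v`
with respect to the source `s`. -/
def diversity (G : Multigraph V E) [Fintype V] [Fintype E] [DecidableEq V]
    (s v : V) : ℕ :=
  (Finset.univ.filter fun u => u ≠ s ∧ ∃ e : E, G.tail e = u ∧ G.head e = v).card +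
  (Finset.univ.filter fun e : E => G.tail e = s ∧ G.head e = v).card

/-- A multigraph is acyclic if it has no closed walk. -/
def Acyclic (G : Multigraph V E) : Prop := ∀ v : V, IsEmpty (G.Walk v v)

/-- The broadcast transformation with source `s`: every vertex `u ≠ s` is
split into `u → u⁺`, all edges into `u` are kept, and every edge out of
`u` is redirected to originate from `u⁺` (edges out of `s` are unchanged). -/
def broadcast (G : Multigraph V E) (s : V) [DecidableEq V] :
    Multigraph (V ⊕ {u : V // u ≠ s}) (E ⊕ {u : V // u ≠ s}) where
  tail := fun x => match x with
    | Sum.inl e => if h : G.tail e = s then Sum.inl s else Sum.inr ⟨G.tail e, h⟩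
    | Sum.inr u => Sum.inl u.1
  head := fun x => match x with
    | Sum.inl e => Sum.inl (G.head e)
    | Sum.inr u => Sum.inr u

/-- `hw` is the walk in the broadcast transformation corresponding to `w`:
the original edges appearing along `hw`, in order, are exactly those of `w`. -/
def Corresponds [DecidableEq V] {G : Multigraph V E} {s t : V} (w : G.Walk s t)
    (hw : (G.broadcast s).Walk (Sum.inl s) (Sum.inl t)) : Prop :=
  hw.edges.filterMap (Sum.elim some (fun _ => none)) = w.edges

/-- `v` is reachable from `s` by a walk avoiding the vertex set `A`
(in the graph `G − A`). -/
def ReachAvoid (G : Multigraph V E) (A : Set V) (s v : V) : Prop :=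
  v = s ∨ ∃ w : G.Walk s v, ∀ x ∈ w.vertexSet, x ∉ A

end Multigraph

/-!
Internally-disjoint paths are in particular edge-disjoint. For Menger's theorem, weak duality is
immediate: a walk from `s` to `t` leaves every `S ∋ s` with `t ∉ S` through an edge of `[S, S̄]`.
For the converse we run Ford–Fulkerson with unit capacities. If an edge set `F` carries a flow of
value `m` smaller than every cut, then `t` is reachable from `s` in the residual graph, since
otherwise the reachable set `R` would satisfy `|[R, R̄]| = m`; flipping the edges of a residual
trail from `s` to `t` yields a flow of value `m + 1`. Starting from `∅` this gives a flow whose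
value is the minimum cut size, and greedily peeling off trails from `s` to `t` decomposes it into
that many edge-disjoint walks.
-/

open Function

theorem Fin.pairwise_cons {α : Type*} {r : α → α → Prop} (hr : ∀ ⦃x y⦄, r x y → r y x) {n : ℕ}
    {a : α} {f : Fin n → α} (ha : ∀ i, r a (f i)) (hf : Pairwise (r on f)) :
    Pairwise (r on (Fin.cons a f : Fin (n + 1) → α)) := by
  intro i j hij
  cases i using Fin.cases <;> cases j using Fin.cases
  · exact absurd rfl hij
  · exact ha _
  · exact hr (ha _)
  · exact hf fun h => hij (congrArg _ h)

namespace Multigraph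

open Finset

variable {V E : Type} {G : Multigraph V E} {a b s t : V}

inductive IsWalk (G : Multigraph V E) : V → List E → V → Prop
  | nil (v : V) : G.IsWalk v [] v
  | cons {e : E} {l : List E} {a b : V} : G.tail e = a → G.IsWalk (G.head e) l b →
      G.IsWalk a (e :: l) b

@[simp]
theorem isWalk_nil_iff : G.IsWalk a [] b ↔ a = b :=
  ⟨fun h => by cases h; rfl, fun h => h ▸ .nil a⟩

@[simp]
theorem isWalk_cons_iff {e : E} {l : List E} :
    G.IsWalk a (e :: l) b ↔ G.tail e = a ∧ G.IsWalk (G.head e) l b :=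
  ⟨fun h => by cases h with | cons h₁ h₂ => exact ⟨h₁, h₂⟩, fun h => .cons h.1 h.2⟩

theorem isWalk_append_iff {l₁ l₂ : List E} :
    G.IsWalk a (l₁ ++ l₂) b ↔ ∃ c, G.IsWalk a l₁ c ∧ G.IsWalk c l₂ b := by
  induction l₁ generalizing a with
  | nil => simp
  | cons e l₁ ih => simp [ih, and_assoc]

theorem isWalk_iff_chain {l : List E} (hne : l ≠ []) :
    G.IsWalk a l b ↔ G.tail (l.head hne) = a ∧ G.head (l.getLast hne) = b ∧
      l.IsChain fun e f => G.head e = G.tail f := by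
  induction l generalizing a with
  | nil => exact absurd rfl hne
  | cons e l ih =>
    cases l with
    | nil => simp
    | cons f l => simp [ih, List.isChain_cons_cons, eq_comm (a := G.head e)]; tauto

theorem Walk.isWalk (w : G.Walk s t) : G.IsWalk s w.edges t :=
  (isWalk_iff_chain w.ne).2 ⟨w.first, w.last, w.chain⟩

def IsWalk.toWalk {l : List E} (h : G.IsWalk a l b) (hne : l ≠ []) : G.Walk a b :=
  have h' := (isWalk_iff_chain hne).1 h
  ⟨l, hne, h'.1, h'.2.1, h'.2.2⟩

theorem IsWalk.exists_nodup_subset {l : List E} (h : G.IsWalk a l b) :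
    ∃ l', G.IsWalk a l' b ∧ l'.Nodup ∧ l' ⊆ l := by
  induction h with
  | nil v => exact ⟨[], .nil v, List.nodup_nil, List.Subset.refl _⟩
  | @cons e l a b hea _ ih =>
    obtain ⟨l', hl', hnd, hsub⟩ := ih
    by_cases he : e ∈ l'
    · -- cut out the closed walk between the two occurrences of `e`
      obtain ⟨l₁, l₂, rfl⟩ := List.append_of_mem he
      obtain ⟨c, -, hc⟩ := isWalk_append_iff.1 hl'
      refine ⟨e :: l₂, ?_, hnd.sublist (List.sublist_append_right _ _), ?_⟩
      · exact isWalk_cons_iff.2 ⟨hea, (isWalk_cons_iff.1 hc).2⟩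
      · exact List.Subset.trans (List.subset_append_right _ _)
          (List.Subset.trans hsub (List.subset_cons_self _ _))
    · exact ⟨e :: l', .cons hea hl', List.nodup_cons.2 ⟨he, hnd⟩, List.cons_subset_cons _ hsub⟩

theorem IsWalk.exists_mem_crossing {l : List E} (h : G.IsWalk a l b) {S : Set V} (ha : a ∈ S)
    (hb : b ∉ S) : ∃ e ∈ l, G.tail e ∈ S ∧ G.head e ∉ S := by
  induction h with
  | nil => exact absurd ha hb
  | @cons e l a b hea _ ih =>
    by_cases he : G.head e ∈ S
    · obtain ⟨f, hf, hfS⟩ := ih he hb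
      exact ⟨f, List.mem_cons_of_mem _ hf, hfS⟩
    · exact ⟨e, List.mem_cons_self, hea ▸ ha, he⟩

theorem HasEdgeDisjoint.le_card_cutE [Fintype E] [DecidableEq V] {n : ℕ}
    (h : G.HasEdgeDisjoint s t n) {S : Finset V} (hs : s ∈ S) (ht : t ∉ S) :
    n ≤ #(G.cutE S) := by
  obtain ⟨P, hP⟩ := h
  choose f hfP hfS using fun i => (P i).isWalk.exists_mem_crossing (S := ↑S) hs ht
  have hinj : Set.InjOn f Set.univ := fun i _ j _ hij => by
    by_contra hne
    exact (hP i j hne).subset ⟨hfP i, hij ▸ hfP j⟩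
  simpa using Finset.card_le_card_of_injOn (s := Finset.univ) f
    (fun i _ => by simpa [cutE] using hfS i) (by simpa using hinj)

noncomputable def netOut (G : Multigraph V E) (S : Set V) (e : E) : ℤ :=
  S.indicator 1 (G.tail e) - S.indicator 1 (G.head e)

theorem netOut_pos_iff {S : Set V} {e : E} : 0 < G.netOut S e ↔ G.tail e ∈ S ∧ G.head e ∉ S := by
  classical
  by_cases h₁ : G.tail e ∈ S <;> by_cases h₂ : G.head e ∈ S <;> simp [netOut, h₁, h₂]

theorem IsWalk.sum_netOut {l : List E} (h : G.IsWalk a l b) (S : Set V) :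
    (l.map (G.netOut S)).sum = S.indicator 1 a - S.indicator 1 b := by
  induction h with
  | nil => simp
  | cons hea _ ih => rw [List.map_cons, List.sum_cons, ih, netOut, hea]; abel

noncomputable def flux (G : Multigraph V E) (F : Finset E) (S : Set V) : ℤ :=
  ∑ e ∈ F, G.netOut S e

/-- A unit-capacity `s`-`t` flow of value `n`, given by its support `F`; conservation is imposed
on every vertex set, not only on singletons. -/
def IsFlow (G : Multigraph V E) (s t : V) (F : Finset E) (n : ℕ) : Prop :=
  ∀ S : Set V, G.flux F S = n * (S.indicator 1 s - S.indicator 1 t)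

theorem flux_erase [DecidableEq E] {F : Finset E} {e : E} (he : e ∈ F) (S : Set V) :
    G.flux (F.erase e) S = G.flux F S - G.netOut S e :=
  Finset.sum_erase_eq_sub he

theorem exists_trail_of_flux_pos [DecidableEq E] {F : Finset E}
    (hF : ∀ v ≠ t, 0 ≤ G.flux F {v}) (ha : 0 < G.flux F {a}) :
    ∃ l, G.IsWalk a l t ∧ l ≠ [] ∧ l.Nodup ∧ ∀ e ∈ l, e ∈ F := by
  classical
  induction F using Finset.strongInduction generalizing a with
  | H F ih =>
  obtain ⟨e, heF, he⟩ : ∃ e ∈ F, 0 < G.netOut {a} e :=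
    Finset.exists_lt_of_sum_lt (by simpa [flux] using ha)
  obtain ⟨rfl, hea⟩ := netOut_pos_iff.1 he
  rw [Set.mem_singleton_iff] at hea
  by_cases het : G.head e = t
  · exact ⟨[e], by simp [het], by simp, by simp, by simp [heF]⟩
  have hnet (v : V) :
      G.netOut {v} e = (if G.tail e = v then 1 else 0) - (if G.head e = v then 1 else 0) := by
    simp [netOut, Set.indicator_apply]
  obtain ⟨l, hl, -, hnd, hsub⟩ := ih (F.erase e) (Finset.erase_ssubset heF) (a := G.head e)
    (fun v hv => by
      rw [flux_erase heF, hnet]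
      by_cases h₁ : G.tail e = v
      · subst h₁
        split_ifs <;> linarith
      · rw [if_neg h₁]
        split_ifs <;> linarith [hF v hv])
    (by rw [flux_erase heF, hnet, if_neg (Ne.symm hea), if_pos rfl]; linarith [hF _ het])
  refine ⟨e :: l, isWalk_cons_iff.2 ⟨rfl, hl⟩, List.cons_ne_nil _ _,
    List.nodup_cons.2 ⟨fun h => (Finset.mem_erase.1 (hsub e h)).1 rfl, hnd⟩, ?_⟩
  rintro f (_ | ⟨_, hf⟩)
  exacts [heF, Finset.mem_of_mem_erase (hsub f hf)]

theorem IsFlow.exists_disjoint_walks [DecidableEq E] (hst : s ≠ t) :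
    ∀ {n : ℕ} {F : Finset E}, G.IsFlow s t F n → ∃ P : Fin n → G.Walk s t,
      (∀ i, (P i).edgeSet ⊆ F) ∧ Pairwise (Disjoint on fun i => (P i).edgeSet)
  | 0, _, _ => ⟨Fin.elim0, fun i => i.elim0, fun i => i.elim0⟩
  | n + 1, F, hF => by
    classical
    obtain ⟨l, hl, hne, hnd, hlF⟩ := exists_trail_of_flux_pos (G := G) (F := F) (t := t) (a := s)
      (fun v hv => by simp [hF {v}, Set.indicator_apply, hv.symm]; split_ifs <;> positivity)
      (by simp [hF {s}, hst.symm])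
    have hrest : G.IsFlow s t (F \ l.toFinset) n := fun S => by
      rw [flux, Finset.sum_sdiff_eq_sub (fun e he => hlF e (List.mem_toFinset.1 he)),
        List.sum_toFinset _ hnd, hl.sum_netOut, ← flux, hF S]
      push_cast
      ring
    obtain ⟨P, hPF, hP⟩ := exists_disjoint_walks hst hrest
    refine ⟨Fin.cons (hl.toWalk hne) P, fun i => ?_, Fin.pairwise_cons
      (r := Disjoint on Walk.edgeSet) (fun _ _ h => h.symm)
      (fun i => Set.disjoint_left.2 fun e he hei => ?_) hP⟩
    · cases i using Fin.cases
      · exact hlF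
      · exact (hPF _).trans fun e he => (Finset.mem_sdiff.1 he).1
    · exact (Finset.mem_sdiff.1 (hPF i hei)).2 (List.mem_toFinset.2 he)

def residual (G : Multigraph V E) : Multigraph V (E ⊕ E) where
  tail := Sum.elim G.tail G.head
  head := Sum.elim G.head G.tail

def Admissible (F : Finset E) : E ⊕ E → Prop :=
  Sum.elim (· ∉ F) (· ∈ F)

theorem Admissible.exists_flip [DecidableEq E] {F : Finset E} {x : E ⊕ E} (hx : Admissible F x) :
    ∃ F', (∀ S, G.flux F' S = G.flux F S + G.residual.netOut S x) ∧
      ∀ y ≠ x, Admissible F y → Admissible F' y := by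
  cases x with
  | inl e =>
    refine ⟨insert e F, fun S => by rw [flux, Finset.sum_insert hx, add_comm]; rfl, ?_⟩
    rintro (f | f) hf hfF
    · exact fun h => hfF ((Finset.mem_insert.1 h).resolve_left fun h' => hf (h' ▸ rfl))
    · exact Finset.mem_insert_of_mem hfF
  | inr e =>
    refine ⟨F.erase e, fun S => by
      rw [flux_erase hx]; simp only [residual, netOut, Sum.elim_inr]; abel, ?_⟩
    rintro (f | f) hf hfF
    · exact fun h => hfF (Finset.mem_of_mem_erase h)
    · exact Finset.mem_erase.2 ⟨fun h' => hf (h' ▸ rfl), hfF⟩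

theorem IsWalk.exists_flux_eq [DecidableEq E] {l : List (E ⊕ E)} (h : G.residual.IsWalk a l b)
    (hnd : l.Nodup) {F : Finset E} (hl : ∀ x ∈ l, Admissible F x) :
    ∃ F', ∀ S, G.flux F' S = G.flux F S + (S.indicator 1 a - S.indicator 1 b) := by
  induction h generalizing F with
  | nil => exact ⟨F, by simp⟩
  | @cons x l a b hxa _ ih =>
    obtain ⟨hxl, hnd⟩ := List.nodup_cons.1 hnd
    obtain ⟨F₁, hF₁, hadm⟩ := (hl x List.mem_cons_self).exists_flip
    obtain ⟨F', hF'⟩ := ih hnd fun y hy =>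
      hadm y (fun h => hxl (h ▸ hy)) (hl y (List.mem_cons_of_mem _ hy))
    exact ⟨F', fun S => by rw [hF', hF₁, netOut, hxa]; abel⟩

theorem card_cutE_eq_flux [Fintype E] [DecidableEq V] {F : Finset E} {S : Finset V}
    (hout : ∀ e, G.tail e ∈ S → G.head e ∉ S → e ∈ F)
    (hin : ∀ e ∈ F, G.head e ∈ S → G.tail e ∈ S) :
    (#(G.cutE S) : ℤ) = G.flux F S := by
  have hcut : G.cutE S = F.filter fun e => G.tail e ∈ S ∧ G.head e ∉ S := by
    ext e
    simp only [cutE, Finset.mem_filter, Finset.mem_univ, true_and]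
    exact ⟨fun h => ⟨hout e h.1 h.2, h⟩, And.right⟩
  rw [hcut, ← Finset.sum_boole, flux]
  refine Finset.sum_congr rfl fun e he => ?_
  by_cases h₁ : G.tail e ∈ S <;> by_cases h₂ : G.head e ∈ S
  · simp [netOut, h₁, h₂]
  · simp [netOut, h₁, h₂]
  · exact absurd (hin e he h₂) h₁
  · simp [netOut, h₁, h₂]

theorem IsFlow.exists_isFlow_succ [Fintype V] [Fintype E] [DecidableEq V] [DecidableEq E]
    {F : Finset E} {m : ℕ} (hF : G.IsFlow s t F m)
    (hcut : ∀ S : Finset V, s ∈ S → t ∉ S → m < #(G.cutE S)) :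
    ∃ F', G.IsFlow s t F' (m + 1) := by
  classical
  let R : Finset V := {v | ∃ l, G.residual.IsWalk s l v ∧ ∀ x ∈ l, Admissible F x}
  have hR : ∀ x, G.residual.tail x ∈ R → Admissible F x → G.residual.head x ∈ R := by
    simp only [R, Finset.mem_filter, Finset.mem_univ, true_and]
    rintro x ⟨l, hl, hadm⟩ hx
    refine ⟨l ++ [x], isWalk_append_iff.2 ⟨_, hl, by simp⟩, fun y hy => ?_⟩
    rcases List.mem_append.1 hy with hy | hy
    exacts [hadm y hy, List.mem_singleton.1 hy ▸ hx]
  have hsR : s ∈ R := Finset.mem_filter.2 ⟨Finset.mem_univ _, [], .nil s, by simp⟩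
  have htR : t ∈ R := by
    by_contra htR
    have hcard : (#(G.cutE R) : ℤ) = m := by
      rw [G.card_cutE_eq_flux (fun e h₁ h₂ => by_contra fun he => h₂ (hR (.inl e) h₁ he))
        (fun e he h₁ => hR (.inr e) h₁ he), hF]
      simp [hsR, htR]
    exact (hcut R hsR htR).ne (by exact_mod_cast hcard.symm)
  obtain ⟨l, hl, hadm⟩ := (Finset.mem_filter.1 htR).2
  obtain ⟨l', hl', hnd, hsub⟩ := hl.exists_nodup_subset
  obtain ⟨F', hF'⟩ := hl'.exists_flux_eq hnd fun x hx => hadm x (hsub hx)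
  exact ⟨F', fun S => by rw [hF', hF S]; push_cast; ring⟩

theorem exists_isFlow_of_le_card_cutE [Fintype V] [Fintype E] [DecidableEq V] [DecidableEq E]
    {k : ℕ} (hk : ∀ S : Finset V, s ∈ S → t ∉ S → k ≤ #(G.cutE S)) :
    ∃ F, G.IsFlow s t F k := by
  induction k with
  | zero => exact ⟨∅, fun S => by simp [flux]⟩
  | succ k ih =>
    obtain ⟨F, hF⟩ := ih fun S hs ht => (hk S hs ht).trans' k.le_succ
    exact hF.exists_isFlow_succ hk

theorem exists_min_cutE [Fintype V] [Fintype E] [DecidableEq V] (hst : s ≠ t) :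
    ∃ S₀ : Finset V, s ∈ S₀ ∧ t ∉ S₀ ∧
      ∀ S : Finset V, s ∈ S → t ∉ S → #(G.cutE S₀) ≤ #(G.cutE S) := by
  obtain ⟨S₀, hS₀, hmin⟩ := Finset.exists_min_image {S : Finset V | s ∈ S ∧ t ∉ S}
    (fun S => #(G.cutE S)) ⟨{s}, by simpa using hst.symm⟩
  simp only [Finset.mem_filter, Finset.mem_univ, true_and] at hS₀ hmin
  exact ⟨S₀, hS₀.1, hS₀.2, fun S hs ht => hmin S ⟨hs, ht⟩⟩

end Multigraph

/-- The maximum number of pairwise internally-disjoint `s`-`t`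
paths is at most the maximum number of pairwise edge-disjoint `s`-`t` paths,
which (Menger, edge version) equals the minimum size of an `s,t`-edge cut. -/
theorem stmt9 {V E : Type} [Fintype V] [Fintype E] [DecidableEq V]
    (G : Multigraph V E) (s t : V) (hst : s ≠ t) :
    (∀ n, G.HasIntDisjoint s t n → G.HasEdgeDisjoint s t n) ∧
    ∃ k : ℕ,
      (G.HasEdgeDisjoint s t k ∧ ∀ n, G.HasEdgeDisjoint s t n → n ≤ k) ∧
      (∃ S : Finset V, s ∈ S ∧ t ∉ S ∧ (G.cutE S).card = k) ∧
      (∀ S : Finset V, s ∈ S → t ∉ S → k ≤ (G.cutE S).card) := by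
  classical
  refine ⟨fun n ⟨P, hP⟩ => ⟨P, fun i j hij => (hP i j hij).2⟩, ?_⟩
  obtain ⟨S₀, hs, ht, hmin⟩ := G.exists_min_cutE hst
  refine ⟨(G.cutE S₀).card, ⟨?_, fun n hn => hn.le_card_cutE hs ht⟩, ⟨S₀, hs, ht, rfl⟩, hmin⟩
  obtain ⟨F, hF⟩ := G.exists_isFlow_of_le_card_cutE hmin
  obtain ⟨P, -, hP⟩ := hF.exists_disjoint_walks hst
  exact ⟨P, fun i j hij => Set.disjoint_iff_inter_eq_empty.1 (hP hij)⟩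
end

section
/- Let G be a finite directed acyclic multigraph with source s in which every vertex v ≠ s has diversity d(v) ≥ d, and let t ≠ s be nonadjacent to s. Then for every s,t-edge cut [S, S̄] with s ∉ tail([S, S̄]), we have |tail([S, S̄])| ≥ d. -/
/-! Acyclicity makes the parent relation well founded, so some vertex `u ∉ S` has all its parents
in `S`. Every edge into `u` then lies in the cut `[S, S̄]`, none of them starts at `s`, and so
`tail([S, S̄])` contains `Γ⁻(u)`, which has `d(u) ≥ d` elements. -/

namespace Multigraph

variable {V E : Type} {G : Multigraph V E}

namespace Walk

def single (e : E) : G.Walk (G.tail e) (G.head e) where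
  edges := [e]
  ne := List.cons_ne_nil e []
  first := rfl
  last := rfl
  chain := List.isChain_singleton e

def snoc {s t : V} (w : G.Walk s t) (e : E) (he : G.tail e = t) : G.Walk s (G.head e) where
  edges := w.edges ++ [e]
  ne := List.concat_ne_nil e w.edges
  first := by rw [List.head_append_of_ne_nil w.ne]; exact w.first
  last := by rw [List.getLast_append_singleton]
  chain := w.chain.append (List.isChain_singleton e) (by
    rw [List.getLast?_eq_some_getLast w.ne]
    rintro x ⟨⟩ y ⟨⟩
    rw [he, w.last])

end Walk

theorem nonempty_walk_of_transGen {u v : V}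
    (h : Relation.TransGen (fun x y => x ∈ G.parents y) u v) : Nonempty (G.Walk u v) := by
  induction h with
  | single hxy =>
    obtain ⟨e, rfl, rfl⟩ := hxy
    exact ⟨Walk.single e⟩
  | tail _ hxy ih =>
    obtain ⟨e, he, rfl⟩ := hxy
    exact ⟨ih.some.snoc e he⟩

theorem Acyclic.wellFounded_parents [Finite V] (hG : G.Acyclic) :
    WellFounded fun u v => u ∈ G.parents v := by
  have : IsTrans V (Relation.TransGen fun u v => u ∈ G.parents v) := ⟨fun _ _ _ => .trans⟩
  have : Std.Irrefl (Relation.TransGen fun u v => u ∈ G.parents v) :=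
    ⟨fun v hv => (hG v).false (nonempty_walk_of_transGen hv).some⟩
  exact Subrelation.wf (fun h => .single h)
    (Finite.wellFounded_of_trans_of_irrefl (Relation.TransGen fun u v => u ∈ G.parents v))

theorem Acyclic.exists_mem_forall_parents_notMem [Finite V] (hG : G.Acyclic) {T : Set V}
    (hT : T.Nonempty) : ∃ u ∈ T, ∀ v ∈ G.parents u, v ∉ T :=
  let ⟨u, hu, hmin⟩ := hG.wellFounded_parents.has_min T hT
  ⟨u, hu, fun v hv hvT => hmin v hvT hv⟩

theorem diversity_le_card_tailSet [Fintype V] [Fintype E] [DecidableEq V] {s u : V}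
    {S : Finset V} (hsS : s ∈ S) (hs : s ∉ G.tailSet S) (hu : u ∉ S)
    (hpar : ∀ v ∈ G.parents u, v ∈ S) : G.diversity s u ≤ (G.tailSet S).card := by
  have mem_tailSet : ∀ e, G.head e = u → G.tail e ∈ G.tailSet S := fun e he =>
    Finset.mem_image.2 ⟨e, Finset.mem_filter.2
      ⟨Finset.mem_univ e, hpar _ ⟨e, rfl, he⟩, he ▸ hu⟩, rfl⟩
  have no_edge_from_s :
      (Finset.univ.filter fun e : E => G.tail e = s ∧ G.head e = u).card = 0 := by
    rw [Finset.card_eq_zero, Finset.filter_eq_empty_iff]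
    rintro e - ⟨rfl, he⟩
    exact hs (mem_tailSet e he)
  have parents_subset :
      (Finset.univ.filter fun v => v ≠ s ∧ ∃ e : E, G.tail e = v ∧ G.head e = u) ⊆
        G.tailSet S := by
    intro v hv
    obtain ⟨-, -, e, rfl, he⟩ := Finset.mem_filter.1 hv
    exact mem_tailSet e he
  rw [diversity, no_edge_from_s, add_zero]
  exact Finset.card_le_card parents_subset

end Multigraph

theorem stmt11_general {V E : Type} [Fintype V] [Fintype E] [DecidableEq V]
    (G : Multigraph V E) (s : V) (hacyc : G.Acyclic) (d : ℕ)
    (hdiv : ∀ v : V, v ≠ s → d ≤ G.diversity s v)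
    (t : V) (S : Finset V) (hsS : s ∈ S) (htS : t ∉ S) (hs : s ∉ G.tailSet S) :
    d ≤ (G.tailSet S).card := by
  obtain ⟨u, hu, hpar⟩ := hacyc.exists_mem_forall_parents_notMem (T := (↑S)ᶜ) ⟨t, htS⟩
  have hus : u ≠ s := fun h => hu (h ▸ hsS)
  exact (hdiv u hus).trans <|
    G.diversity_le_card_tailSet hsS hs hu fun v hv => not_not.1 (hpar v hv)

/-- In an acyclic multigraph with all non-source diversities at
least `d`, for `t ≠ s` nonadjacent to `s`, every `s,t`-edge cut `[S,S̄]`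
with `s ∉ tail([S,S̄])` satisfies `|tail([S,S̄])| ≥ d`. -/
theorem stmt11 {V E : Type} [Fintype V] [Fintype E] [DecidableEq V]
    (G : Multigraph V E) (s : V) (hacyc : G.Acyclic) (d : ℕ)
    (hdiv : ∀ v : V, v ≠ s → d ≤ G.diversity s v)
    (t : V) (hts : t ≠ s) (hna : G.Nonadjacent s t)
    (S : Finset V) (hsS : s ∈ S) (htS : t ∉ S) (hs : s ∉ G.tailSet S) :
    d ≤ (G.tailSet S).card :=
  stmt11_general G s hacyc d hdiv t S hsS htS hs
end
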